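/- arXiv:1507.02546 — 2 statements merged into one kernel-verified Lean document; each statement's English description precedes it below -/
import Mathlib

section
/- Let G be a finite connected simple graph with ε ≥ 1 edges and let Γ_G be its edge-set graph. Then the minimum degree of Γ_G satisfies δ(Γ_G) ≥ 2(ε − 1). -/
open scoped Classical

/-- Two edges (as elements of `Sym2 V`) are *adjacent* if they are distinct and
share a common endpoint. -/
def EdgeAdj {V : Type*} (e f : Sym2 V) : Prop := e ≠ f ∧ ∃ v, v ∈ e ∧ v ∈ f

lemma EdgeAdj.symm {V : Type*} {e f : Sym2 V} (h : EdgeAdj e f) : EdgeAdj f e :=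
  ⟨h.1.symm, h.2.elim fun v hv => ⟨v, hv.2, hv.1⟩⟩

/-- The *edge-set graph* of a simple graph `G`: its vertices are the nonempty
(finite) subsets of the edge set of `G`, two distinct such subsets being adjacent
if and only if some edge in the first is adjacent to some edge in the second. -/
def edgeSetGraph {V : Type*} (G : SimpleGraph V) :
    SimpleGraph {S : Finset (Sym2 V) // ↑S ⊆ G.edgeSet ∧ S.Nonempty} where
  Adj A B := A ≠ B ∧ ∃ e ∈ A.1, ∃ f ∈ B.1, EdgeAdj e f
  symm := by
    refine ⟨?_⟩
    rintro A B ⟨hAB, e, he, f, hf, hef⟩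
    exact ⟨hAB.symm, f, hf, e, he, hef.symm⟩
  loopless := by refine ⟨?_⟩; rintro A ⟨h, -⟩; exact h rfl


open Finset

/-! If `M` is a set of edges each adjacent to some edge of `A`, then every edge set meeting `M`,
other than `A` itself, is a neighbour of `A` in `Γ_G`; there are `2^ε - 2^(ε - |M|)` edge sets
meeting `M`. When `A` contains two adjacent edges, take `M` to be these two, giving at least
`3 · 2^(ε-2) - 1` neighbours. Otherwise connectivity provides an edge `f ∉ A` adjacent to an
edge of `A`; with `M = {f}` the set `A` is not among those counted, giving `2^(ε-1)` neighbours.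
Both bounds are at least `2(ε - 1)`. -/

theorem Finset.card_powerset_filter_inter_nonempty {α : Type*} [DecidableEq α] {E M : Finset α}
    (hM : M ⊆ E) : #{T ∈ E.powerset | (T ∩ M).Nonempty} = 2 ^ #E - 2 ^ (#E - #M) := by
  have hdisjoint : {T ∈ E.powerset | ¬(T ∩ M).Nonempty} = (E \ M).powerset := by
    ext T
    simp only [mem_filter, mem_powerset, not_nonempty_iff_eq_empty,
      ← disjoint_iff_inter_eq_empty, subset_sdiff]
  have hsplit := card_filter_add_card_filter_not (s := E.powerset) fun T => (T ∩ M).Nonempty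
  rw [hdisjoint, card_powerset, card_powerset, card_sdiff_of_subset hM] at hsplit
  omega

theorem SimpleGraph.Connected.exists_edgeAdj {V : Type*} {G : SimpleGraph V}
    (hconn : G.Connected) {e f : Sym2 V} (hf : f ∈ G.edgeSet) (hef : e ≠ f) : ∃ g ∈ G.edgeSet, EdgeAdj e g := by
  induction f using Sym2.ind with
  | _ c d =>
  have houtside : ∃ x, x ∉ e := by
    by_contra! h
    exact hef ((Sym2.mem_and_mem_iff (G.ne_of_adj hf)).mp ⟨h c, h d⟩)
  obtain ⟨x, hx⟩ := houtside
  -- a walk from inside `e` to outside `e` leaves `e` along an edge adjacent to `e`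
  obtain ⟨dart, -, hfst, hsnd⟩ := ((hconn e.out.1 x).some).exists_boundary_dart
    {v | v ∈ e} (Sym2.out_fst_mem e) hx
  refine ⟨dart.edge, dart.edge_mem, ?_, dart.fst, hfst, Sym2.mem_mk_left _ _⟩
  rintro rfl
  exact hsnd (Sym2.mem_mk_right _ _)

namespace edgeSetGraph

variable {V : Type*} [Fintype V] {G : SimpleGraph V}

theorem card_erase_filter_inter_nonempty_le_degree
    (A : {S : Finset (Sym2 V) // ↑S ⊆ G.edgeSet ∧ S.Nonempty}) {M : Finset (Sym2 V)}
    (hadj : ∀ g ∈ M, ∃ e ∈ A.1, EdgeAdj g e) :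
    #({T ∈ G.edgeFinset.powerset | (T ∩ M).Nonempty}.erase A.1) ≤
      (edgeSetGraph G).degree A := by
  rw [← SimpleGraph.card_neighborFinset_eq_degree,
    ← card_map (Function.Embedding.subtype _)]
  refine card_le_card fun T hT => ?_
  obtain ⟨hTA, hT⟩ := mem_erase.mp hT
  obtain ⟨hTE, g, hg⟩ := mem_filter.mp hT
  obtain ⟨hgT, hgM⟩ := mem_inter.mp hg
  obtain ⟨e, heA, hge⟩ := hadj g hgM
  have hTedges : ↑T ⊆ G.edgeSet := fun t ht =>
    SimpleGraph.mem_edgeFinset.mp (mem_powerset.mp hTE ht)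
  refine mem_map.mpr ⟨⟨T, hTedges, g, hgT⟩, ?_, rfl⟩
  rw [SimpleGraph.mem_neighborFinset]
  exact ⟨fun h => hTA (congrArg Subtype.val h).symm, e, heA, g, hgT, hge.symm⟩

theorem two_mul_card_edgeFinset_sub_one_le_degree (hconn : G.Connected)
    (h2 : 2 ≤ #G.edgeFinset) (A : {S : Finset (Sym2 V) // ↑S ⊆ G.edgeSet ∧ S.Nonempty}) :
    2 * (#G.edgeFinset - 1) ≤ (edgeSetGraph G).degree A := by
  obtain ⟨n, hn⟩ : ∃ n, #G.edgeFinset = n + 2 := ⟨_, (Nat.sub_add_cancel h2).symm⟩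
  have hpow := Nat.lt_two_pow_self (n := n)
  obtain ⟨e, heA⟩ := A.2.2
  by_cases hinside : ∃ x ∈ A.1, ∃ y ∈ A.1, EdgeAdj x y
  · obtain ⟨x, hx, y, hy, hxy⟩ := hinside
    have hAE : A.1 ⊆ G.edgeFinset := fun g hg => SimpleGraph.mem_edgeFinset.mpr (A.2.1 hg)
    have hdeg := card_erase_filter_inter_nonempty_le_degree A (M := {x, y}) (by
      simp only [mem_insert, mem_singleton, forall_eq_or_imp, forall_eq]
      exact ⟨⟨y, hy, hxy⟩, x, hx, hxy.symm⟩)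
    have herase := pred_card_le_card_erase
      (s := {T ∈ G.edgeFinset.powerset | (T ∩ {x, y}).Nonempty}) (a := A.1)
    rw [card_powerset_filter_inter_nonempty (insert_subset (hAE hx) (singleton_subset_iff.mpr (hAE hy))),
      card_pair hxy.1, hn, Nat.add_sub_cancel, pow_add] at herase
    omega
  · obtain ⟨f₀, hf₀, hne⟩ := exists_mem_ne h2 e
    obtain ⟨f, hf, hef⟩ := hconn.exists_edgeAdj (SimpleGraph.mem_edgeFinset.mp hf₀) hne.symm
    have hfA : f ∉ A.1 := fun hfA => hinside ⟨e, heA, f, hfA, hef⟩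
    have hAf : A.1 ∉ {T ∈ G.edgeFinset.powerset | (T ∩ {f}).Nonempty} := by
      simp [inter_singleton_of_notMem hfA]
    have hdeg := card_erase_filter_inter_nonempty_le_degree A (M := {f}) (by
      simpa using ⟨e, heA, hef.symm⟩)
    rw [erase_eq_of_notMem hAf, card_powerset_filter_inter_nonempty
      (singleton_subset_iff.mpr (SimpleGraph.mem_edgeFinset.mpr hf)), card_singleton, hn,
      show n + 2 - 1 = n + 1 from rfl, pow_succ, pow_succ] at hdeg
    omega

end edgeSetGraph

theorem stmt_2_general {V : Type*} [Fintype V] (G : SimpleGraph V) (hconn : G.Connected) :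
    2 * (G.edgeFinset.card - 1) ≤ (edgeSetGraph G).minDegree := by
  rcases Nat.lt_or_ge #G.edgeFinset 2 with hsmall | h2
  · simp [show #G.edgeFinset - 1 = 0 by omega]
  · obtain ⟨e, he⟩ := card_pos.mp (by omega : 0 < #G.edgeFinset)
    have : Nonempty {S : Finset (Sym2 V) // ↑S ⊆ G.edgeSet ∧ S.Nonempty} :=
      ⟨⟨{e}, by simpa using he, singleton_nonempty e⟩⟩
    exact SimpleGraph.le_minDegree_of_forall_le_degree _ _
      (edgeSetGraph.two_mul_card_edgeFinset_sub_one_le_degree hconn h2)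

/-- For a finite connected simple graph `G` with `ε ≥ 1` edges, the minimum degree
of the edge-set graph `Γ_G` is at least `2(ε - 1)`. -/
theorem stmt_2 {V : Type*} [Fintype V] (G : SimpleGraph V) (hconn : G.Connected)
    (hE : 1 ≤ G.edgeFinset.card) :
    2 * (G.edgeFinset.card - 1) ≤ (edgeSetGraph G).minDegree :=
  stmt_2_general G hconn
end

section
/- For every n ≥ 4, the path P_n has exactly one connected edge dominating set of minimum cardinality, namely the set of its internal edges {e_2, e_3, …, e_{n−2}} (labelling the edges consecutively as e_1, …, e_{n−1}); that is, the connected edge domination index of P_n is 1. -/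
open scoped Classical

/-- The edge set `X` induces a connected subgraph: the graph on the endpoints of
edges of `X`, with edge set `X`, is connected. -/
def IsConnectedEdgeSet {V : Type*} (X : Set (Sym2 V)) : Prop :=
  ((SimpleGraph.fromEdgeSet X).induce {v | ∃ e ∈ X, v ∈ e}).Connected

/-- `X` is a *connected edge dominating set* of `G`: a set of edges of `G` such that
every edge of `G` not in `X` is adjacent to some edge of `X`, and the subgraph of `G`
induced by the edge set `X` is connected. -/
def IsCEDS {V : Type*} (G : SimpleGraph V) (X : Finset (Sym2 V)) : Prop :=
  ↑X ⊆ G.edgeSet ∧ (∀ e ∈ G.edgeSet, e ∉ X → ∃ f ∈ X, EdgeAdj e f) ∧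
    IsConnectedEdgeSet (X : Set (Sym2 V))

/-- `X` is a connected edge dominating set of `G` of minimum cardinality. -/
def IsMinCEDS {V : Type*} (G : SimpleGraph V) (X : Finset (Sym2 V)) : Prop :=
  IsCEDS G X ∧ ∀ Y : Finset (Sym2 V), IsCEDS G Y → X.card ≤ Y.card

/-!
Every connected edge dominating set `Y` of `P_n` contains all internal edges: dominating the end
edge `s(0, 1)` forces `Y` to touch a vertex `≤ 1`, dominating `s(n - 2, n - 1)` forces it to touch a
vertex `≥ n - 2`, and a connected set of path edges joining two vertices contains every edge between
them, since a walk along the path cannot skip an edge. Conversely, for `n ≥ 4` the internal edges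
form a connected set dominating both end edges, so they are the unique minimum.
-/

open SimpleGraph

lemma exists_meeting_edge_of_dominating {V : Type*} {G : SimpleGraph V} {X : Finset (Sym2 V)}
    (hX : ∀ e ∈ G.edgeSet, e ∉ X → ∃ f ∈ X, EdgeAdj e f) {e : Sym2 V} (he : e ∈ G.edgeSet) :
    ∃ f ∈ X, ∃ v ∈ e, v ∈ f := by
  by_cases heX : e ∈ X
  · induction e using Sym2.ind with
    | _ x y => exact ⟨s(x, y), heX, x, Sym2.mem_mk_left x y, Sym2.mem_mk_left x y⟩
  · obtain ⟨f, hf, -, v, hve, hvf⟩ := hX e he heX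
    exact ⟨f, hf, v, hve, hvf⟩

namespace SimpleGraph

lemma exists_eq_mk_of_mem_edgeSet_pathGraph {n : ℕ} {e : Sym2 (Fin n)}
    (he : e ∈ (pathGraph n).edgeSet) : ∃ a b : Fin n, a.val + 1 = b.val ∧ e = s(a, b) := by
  induction e using Sym2.ind with
  | _ u v =>
    rcases pathGraph_adj.1 he with h | h
    · exact ⟨u, v, h, rfl⟩
    · exact ⟨v, u, h, Sym2.eq_swap⟩

lemma Walk.adj_of_le_pathGraph {n : ℕ} {H : SimpleGraph (Fin n)} (hH : H ≤ pathGraph n)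
    {x y : Fin n} (p : H.Walk x y) {a b : Fin n} (hab : a.val + 1 = b.val) (hx : x ≤ a)
    (hy : b ≤ y) : H.Adj a b := by
  obtain ⟨d, -, hda, hdb⟩ := p.exists_boundary_dart (Set.Iic a) hx
    (by rw [Set.mem_Iic, Fin.le_def] at *; omega)
  rw [Set.mem_Iic, Fin.le_def] at hda hdb
  have hd := pathGraph_adj.1 (hH d.adj)
  obtain ⟨rfl, rfl⟩ : d.fst = a ∧ d.snd = b := by
    constructor <;> ext <;> omega
  exact d.adj

end SimpleGraph

lemma IsConnectedEdgeSet.mk_mem_of_pathGraph {n : ℕ} {Y : Set (Sym2 (Fin n))}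
    (hY : Y ⊆ (pathGraph n).edgeSet) (hc : IsConnectedEdgeSet Y) {u v a b : Fin n}
    (hu : ∃ e ∈ Y, u ∈ e) (hv : ∃ e ∈ Y, v ∈ e) (hab : a.val + 1 = b.val) (hua : u ≤ a)
    (hbv : b ≤ v) : s(a, b) ∈ Y := by
  obtain ⟨p⟩ := hc.preconnected ⟨u, hu⟩ ⟨v, hv⟩
  have hle : fromEdgeSet Y ≤ pathGraph n :=
    (fromEdgeSet_le _).2 (Set.sdiff_subset.trans hY)
  exact ((fromEdgeSet_adj _).1
    ((p.map (Embedding.induce _).toHom).adj_of_le_pathGraph hle hab hua hbv)).1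

noncomputable def pathInternalEdges (n : ℕ) : Finset (Sym2 (Fin n)) :=
  {e | e ∈ (pathGraph n).edgeSet ∧ ∀ v ∈ e, 0 < v.val ∧ v.val + 1 < n}

lemma mem_pathInternalEdges {n : ℕ} {e : Sym2 (Fin n)} :
    e ∈ pathInternalEdges n ↔
      e ∈ (pathGraph n).edgeSet ∧ ∀ v ∈ e, 0 < v.val ∧ v.val + 1 < n := by
  simp [pathInternalEdges]

lemma mk_mem_pathInternalEdges {n : ℕ} {a b : Fin n} (hab : a.val + 1 = b.val) (ha : 0 < a.val)
    (hb : b.val + 1 < n) : s(a, b) ∈ pathInternalEdges n := by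
  simp only [mem_pathInternalEdges, mem_edgeSet, pathGraph_adj, Sym2.mem_iff, forall_eq_or_imp,
    forall_eq]
  omega

lemma pathInternalEdges_subset {n : ℕ} {Y : Finset (Sym2 (Fin n))}
    (hY : IsCEDS (pathGraph n) Y) : pathInternalEdges n ⊆ Y := by
  obtain ⟨hsub, hdom, hconn⟩ := hY
  intro e he
  rw [mem_pathInternalEdges] at he
  obtain ⟨a, b, hab, rfl⟩ := exists_eq_mk_of_mem_edgeSet_pathGraph he.1
  have ha := (he.2 a (Sym2.mem_mk_left a b)).1
  have hb := (he.2 b (Sym2.mem_mk_right a b)).2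
  obtain ⟨f, hf, u, hu, huf⟩ := exists_meeting_edge_of_dominating hdom
    (e := s(⟨0, by omega⟩, ⟨1, by omega⟩)) (by simp [pathGraph_adj])
  obtain ⟨g, hg, v, hv, hvg⟩ := exists_meeting_edge_of_dominating hdom
    (e := s(⟨n - 2, by omega⟩, ⟨n - 1, by omega⟩)) (by simp [pathGraph_adj]; omega)
  rw [Sym2.mem_iff] at hu hv
  exact hconn.mk_mem_of_pathGraph hsub ⟨f, hf, huf⟩ ⟨g, hg, hvg⟩ hab
    (by rcases hu with rfl | rfl <;> simp only [Fin.le_def] <;> omega)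
    (by rcases hv with rfl | rfl <;> simp only [Fin.le_def] <;> omega)

lemma isConnectedEdgeSet_pathInternalEdges {n : ℕ} (hn : 4 ≤ n) :
    IsConnectedEdgeSet (pathInternalEdges n : Set (Sym2 (Fin n))) := by
  let S : Set (Fin n) := {v | ∃ e ∈ (pathInternalEdges n : Set (Sym2 (Fin n))), v ∈ e}
  let H := (fromEdgeSet (pathInternalEdges n : Set (Sym2 (Fin n)))).induce S
  let one : S :=
    ⟨⟨1, by omega⟩, s(⟨1, by omega⟩, ⟨2, by omega⟩),
      mk_mem_pathInternalEdges rfl Nat.one_pos (show 2 + 1 < n by omega), Sym2.mem_mk_left _ _⟩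
  have reach : ∀ k (v : S), v.1.val = k + 1 → H.Reachable one v := by
    intro k
    induction k with
    | zero =>
      intro v hv
      rw [show v = one from Subtype.ext (Fin.ext hv)]
    | succ k ih =>
      rintro ⟨v, e, he, hve⟩ (hv : v.val = k + 1 + 1)
      have hkv : s(⟨k + 1, by omega⟩, v) ∈ pathInternalEdges n :=
        mk_mem_pathInternalEdges hv.symm (Nat.succ_pos k) ((mem_pathInternalEdges.1 he).2 v hve).2
      refine (ih ⟨_, _, hkv, Sym2.mem_mk_left _ _⟩ rfl).trans (Adj.reachable ?_)
      exact (fromEdgeSet_adj _).2 ⟨hkv, by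
        simp only [Function.Embedding.coe_subtype, ne_eq, Fin.ext_iff]; omega⟩
  refine (connected_iff _).2 ⟨fun v w => ?_, ⟨one⟩⟩
  have hpos (v : S) : v.1.val = v.1.val - 1 + 1 := by
    obtain ⟨e, he, hve⟩ := v.2
    have := ((mem_pathInternalEdges.1 he).2 v hve).1
    omega
  exact (reach _ v (hpos v)).symm.trans (reach _ w (hpos w))

lemma isCEDS_pathInternalEdges {n : ℕ} (hn : 4 ≤ n) :
    IsCEDS (pathGraph n) (pathInternalEdges n) := by
  refine ⟨fun e he => (mem_pathInternalEdges.1 he).1, ?_, isConnectedEdgeSet_pathInternalEdges hn⟩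
  intro e he heX
  obtain ⟨a, b, hab, rfl⟩ := exists_eq_mk_of_mem_edgeSet_pathGraph he
  have hend : a.val = 0 ∨ b.val + 1 = n := by
    by_contra! h
    exact heX (mk_mem_pathInternalEdges hab (Nat.pos_of_ne_zero h.1) (by omega))
  rcases hend with ha | hb
  · refine ⟨s(b, ⟨2, by omega⟩), mk_mem_pathInternalEdges (show b.val + 1 = 2 by omega)
      (by omega) (show 2 + 1 < n by omega), fun h => ?_, b, Sym2.mem_mk_right a b,
      Sym2.mem_mk_left _ _⟩
    simp only [Sym2.eq_iff, Fin.ext_iff] at h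
    omega
  · refine ⟨s(⟨n - 3, by omega⟩, a), mk_mem_pathInternalEdges (show n - 3 + 1 = a.val by omega)
      (show 0 < n - 3 by omega) (by omega), fun h => ?_, a, Sym2.mem_mk_left a b,
      Sym2.mem_mk_right _ _⟩
    simp only [Sym2.eq_iff, Fin.ext_iff] at h
    omega

lemma isMinCEDS_pathGraph_iff {n : ℕ} (hn : 4 ≤ n) {X : Finset (Sym2 (Fin n))} :
    IsMinCEDS (pathGraph n) X ↔ X = pathInternalEdges n := by
  constructor
  · rintro ⟨hX, hmin⟩
    exact (Finset.eq_of_subset_of_card_le (pathInternalEdges_subset hX)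
      (hmin _ (isCEDS_pathInternalEdges hn))).symm
  · rintro rfl
    exact ⟨isCEDS_pathInternalEdges hn,
      fun Y hY => Finset.card_le_card (pathInternalEdges_subset hY)⟩

lemma image_eq_pathInternalEdges {n : ℕ} (hn : 1 < n) :
    (Finset.univ.filter (fun j : Fin n => 1 ≤ (j : ℕ) ∧ (j : ℕ) ≤ n - 3)).image
      (fun j : Fin n => s(j, j + ⟨1, hn⟩)) = pathInternalEdges n := by
  have hsucc (j : Fin n) (hj : j.val + 1 < n) : (j + ⟨1, hn⟩).val = j.val + 1 := by
    simp only [Fin.val_add]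
    exact Nat.mod_eq_of_lt hj
  ext e
  simp only [Finset.mem_image, Finset.mem_filter, Finset.mem_univ, true_and]
  constructor
  · rintro ⟨j, hj, rfl⟩
    have hj1 := hsucc j (by omega)
    exact mk_mem_pathInternalEdges hj1.symm (by omega) (by omega)
  · intro he
    rw [mem_pathInternalEdges] at he
    obtain ⟨a, b, hab, rfl⟩ := exists_eq_mk_of_mem_edgeSet_pathGraph he.1
    have ha := (he.2 a (Sym2.mem_mk_left a b)).1
    have hb := (he.2 b (Sym2.mem_mk_right a b)).2
    refine ⟨a, ⟨by omega, by omega⟩, ?_⟩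
    rw [show a + ⟨1, hn⟩ = b from Fin.ext ((hsucc a (by omega)).trans hab)]

/-- For `n ≥ 4`, the path `P_n` (vertices `0, 1, …, n-1` in `Fin n`, edges
`e_i = s(i-1, i)` for `1 ≤ i ≤ n-1`) has exactly one connected edge dominating set of
minimum cardinality, namely the set of its internal edges
`{e_2, …, e_{n-2}} = {s(j, j+1) : 1 ≤ j ≤ n-3}`; i.e. its CED-index is `1`. -/
theorem stmt_9 (n : ℕ) (hn : 4 ≤ n) :
    {X : Finset (Sym2 (Fin n)) | IsMinCEDS (SimpleGraph.pathGraph n) X} =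
      {(Finset.univ.filter (fun j : Fin n => 1 ≤ (j : ℕ) ∧ (j : ℕ) ≤ n - 3)).image
          (fun j : Fin n => s(j, j + (⟨1, by omega⟩ : Fin n)))} ∧
    Nat.card {X : Finset (Sym2 (Fin n)) | IsMinCEDS (SimpleGraph.pathGraph n) X} = 1 := by
  have hset : {X : Finset (Sym2 (Fin n)) | IsMinCEDS (pathGraph n) X} = {pathInternalEdges n} :=
    Set.ext fun _ => isMinCEDS_pathGraph_iff hn
  rw [hset, image_eq_pathInternalEdges (by omega)]
  exact ⟨rfl, Nat.card_unique⟩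
end
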